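/- arXiv:0902.2884 — 2 statements merged into one kernel-verified Lean document; each statement's English description precedes it below -/
import Mathlib

section
/- Let L = L₀ ⊕ L₁ be a finite-dimensional nilpotent complex Leibniz superalgebra with dim L₁ = m ≥ 1 which is generated by two elements. Suppose there exists x ∈ L₀ \ L₀² such that (R_x|_{L₁})^{m−1} ≠ 0 and (R_x|_{L₁})^{m} = 0 (i.e. R_x acts on L₁ by a single Jordan block of size m). Then there exist elements x₁ ∈ L₀ and y₁ ∈ L₁ which together generate L, and a basis y₁, y₂, …, y_m of L₁ satisfying [y_j, x₁] = y_{j+1} for 1 ≤ j ≤ m−1 and [y_m, x₁] = 0. -/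
/-!
Work modulo `L² = A.lcs 1`. A set generates the nilpotent algebra `L` iff it spans `L` modulo
`L²`, so `L / L²` is at most two-dimensional. Fix `y₁ ∈ L₁` with `R_x^{m-1} y₁ ≠ 0`. Since `R_v`
is nilpotent on `L₁` for every `v ∈ L₀`, whenever `R_v^{m-1} y₁ ≠ 0` the vectors `R_v^i y₁`
(`i < m`) form a basis of `L₁`, and all but the first lie in `L²`.

Both parities survive modulo `L²`: if `L₁ ⊆ L²` the subalgebra `L₀` would be everything, and if
`L₀ ⊆ L²` then `y₁` alone would generate. Hence `L₀` is one-dimensional modulo `L²`, and `y₁`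
together with any `x₁ ∈ L₀ \ L²` satisfying `R_{x₁}^{m-1} y₁ ≠ 0` does the job. The given `x` may
lie in `L²`, so take `x₁ = x + t • u` with `u ∈ L₀ \ L²`: all but finitely many `t` work, the
second condition being the nonvanishing of a polynomial in `t` that is nonzero at `t = 0`.
-/

/-- A complex Leibniz superalgebra structure on a vector space `V`:
a bilinear bracket together with an internal ℤ₂-grading `V = L0 ⊕ L1`
such that the bracket respects the grading and the Leibniz superidentity
`[x,[y,z]] = [[x,y],z] − (−1)^{αβ}[[x,z],y]` holds for homogeneous `y, z`. -/
structure LeibnizSuperAlg (V : Type*) [AddCommGroup V] [Module ℂ V] where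
  br : V →ₗ[ℂ] V →ₗ[ℂ] V
  L0 : Submodule ℂ V
  L1 : Submodule ℂ V
  compl : IsCompl L0 L1
  grade00 : ∀ x ∈ L0, ∀ y ∈ L0, br x y ∈ L0
  grade01 : ∀ x ∈ L0, ∀ y ∈ L1, br x y ∈ L1
  grade10 : ∀ x ∈ L1, ∀ y ∈ L0, br x y ∈ L1
  grade11 : ∀ x ∈ L1, ∀ y ∈ L1, br x y ∈ L0
  super_ee : ∀ (x : V), ∀ y ∈ L0, ∀ z ∈ L0,
    br x (br y z) = br (br x y) z - br (br x z) y
  super_eo : ∀ (x : V), ∀ y ∈ L0, ∀ z ∈ L1,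
    br x (br y z) = br (br x y) z - br (br x z) y
  super_oe : ∀ (x : V), ∀ y ∈ L1, ∀ z ∈ L0,
    br x (br y z) = br (br x y) z - br (br x z) y
  super_oo : ∀ (x : V), ∀ y ∈ L1, ∀ z ∈ L1,
    br x (br y z) = br (br x y) z + br (br x z) y

namespace LeibnizSuperAlg

variable {V : Type*} [AddCommGroup V] [Module ℂ V]

/-- The span of all products `[u,v]` with `u ∈ S`, `v ∈ T`. -/
def prodSpan (A : LeibnizSuperAlg V) (S T : Submodule ℂ V) : Submodule ℂ V :=
  Submodule.span ℂ {z : V | ∃ u ∈ S, ∃ v ∈ T, z = A.br u v}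

/-- `A.lcs k` is the `(k+1)`-st term `L^{k+1}` of the descending central series:
`L¹ = L`, `L^{k+1} = [L^k, L]`. -/
def lcs (A : LeibnizSuperAlg V) : ℕ → Submodule ℂ V
  | 0 => ⊤
  | k + 1 => A.prodSpan (lcs A k) ⊤

/-- `A.lcs0 k` is the `(k+1)`-st term `L₀^{k+1}` of the descending central series
of the even part: `L₀¹ = L₀`, `L₀^{k+1} = [L₀^k, L₀]`. -/
def lcs0 (A : LeibnizSuperAlg V) : ℕ → Submodule ℂ V
  | 0 => A.L0
  | k + 1 => A.prodSpan (lcs0 A k) A.L0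

/-- Nilpotency: some term of the descending central series vanishes. -/
def IsNilpotent (A : LeibnizSuperAlg V) : Prop := ∃ s, A.lcs s = ⊥

/-- `S` generates `L`: the smallest subspace containing `S` and closed under the
product is `L` itself. -/
def Generates (A : LeibnizSuperAlg V) (S : Set V) : Prop :=
  ∀ W : Submodule ℂ V, S ⊆ W → (∀ u ∈ W, ∀ v ∈ W, A.br u v ∈ W) → W = ⊤

/-- The operator of right multiplication `R_x : z ↦ [z, x]`. -/
def R (A : LeibnizSuperAlg V) (x : V) : V →ₗ[ℂ] V := A.br.flip x

end LeibnizSuperAlg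

open Module Polynomial Submodule

namespace Module.End

variable {K W : Type*} [Field K] [AddCommGroup W] [Module K W] {f : End K W} {ζ : W}

lemma pow_apply_eq_zero_of_le {N j : ℕ} (hN : (f ^ N) ζ = 0) (hj : N ≤ j) : (f ^ j) ζ = 0 := by
  rw [← Nat.sub_add_cancel hj, pow_add, mul_apply, hN, map_zero]

lemma linearIndependent_pow_apply {k : ℕ} (hk : (f ^ k) ζ ≠ 0) (hk' : (f ^ (k + 1)) ζ = 0) :
    LinearIndependent K fun i : Fin (k + 1) => (f ^ (i : ℕ)) ζ := by
  induction k generalizing ζ with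
  | zero => simpa [linearIndependent_unique_iff] using hk
  | succ k ih =>
    have htail : Fin.tail (fun i : Fin (k + 2) => (f ^ (i : ℕ)) ζ)
        = fun i : Fin (k + 1) => (f ^ (i : ℕ)) (f ζ) := by
      ext i; simp [Fin.tail, pow_succ, mul_apply]
    rw [linearIndependent_finSucc, htail]
    refine ⟨ih (by rwa [← mul_apply, ← pow_succ]) (by rwa [← mul_apply, ← pow_succ]), ?_⟩
    have hker : span K (Set.range fun i : Fin (k + 1) => (f ^ (i : ℕ)) (f ζ)) ≤
        LinearMap.ker (f ^ (k + 1)) := by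
      rw [span_le]
      rintro _ ⟨i, rfl⟩
      rw [SetLike.mem_coe, LinearMap.mem_ker, ← mul_apply, ← mul_apply, ← pow_add, ← pow_succ]
      exact pow_apply_eq_zero_of_le hk' (by omega)
    exact fun h => hk (hker h)

variable {U : Submodule K W}

lemma span_pow_apply_le (hU : ∀ w ∈ U, f w ∈ U) (hζ : ζ ∈ U) (n : ℕ) :
    span K (Set.range fun i : Fin n => (f ^ (i : ℕ)) ζ) ≤ U := by
  rw [span_le]
  rintro _ ⟨i, rfl⟩
  exact pow_apply_mem_of_forall_mem _ hU _ hζ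

lemma lt_finrank_of_pow_apply [FiniteDimensional K U] (hU : ∀ w ∈ U, f w ∈ U) (hζ : ζ ∈ U)
    {k : ℕ} (hk : (f ^ k) ζ ≠ 0) (hk' : (f ^ (k + 1)) ζ = 0) : k < finrank K U := by
  have := finrank_mono (span_pow_apply_le hU hζ (k + 1))
  rw [finrank_span_eq_card (linearIndependent_pow_apply hk hk'), Fintype.card_fin] at this
  omega

lemma pow_finrank_apply_eq_zero [FiniteDimensional K U] (hU : ∀ w ∈ U, f w ∈ U) (hζ : ζ ∈ U)
    {N : ℕ} (hN : (f ^ N) ζ = 0) : (f ^ finrank K U) ζ = 0 := by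
  classical
  by_contra h
  have hN' : finrank K U ≤ N := by
    by_contra! hlt
    exact h (pow_apply_eq_zero_of_le hN hlt.le)
  set k := Nat.findGreatest (fun j => (f ^ j) ζ ≠ 0) N
  have hk : (f ^ k) ζ ≠ 0 := Nat.findGreatest_spec (P := fun j => (f ^ j) ζ ≠ 0) hN' h
  have hkN : k < N := by
    by_contra! hNk
    exact hk (pow_apply_eq_zero_of_le hN hNk)
  have hk' : (f ^ (k + 1)) ζ = 0 :=
    not_not.mp (Nat.findGreatest_is_greatest (Nat.lt_succ_self k) hkN)
  exact (lt_finrank_of_pow_apply hU hζ hk hk').not_ge (Nat.le_findGreatest hN' h)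

lemma span_pow_apply_eq [FiniteDimensional K U] (hU : ∀ w ∈ U, f w ∈ U) (hζ : ζ ∈ U) {k : ℕ}
    (hk : (f ^ k) ζ ≠ 0) (hk' : (f ^ (k + 1)) ζ = 0) (hfin : finrank K U = k + 1) :
    span K (Set.range fun i : Fin (k + 1) => (f ^ (i : ℕ)) ζ) = U := by
  refine eq_of_le_of_finrank_eq (span_pow_apply_le hU hζ (k + 1)) ?_
  rw [finrank_span_eq_card (linearIndependent_pow_apply hk hk'), Fintype.card_fin, hfin]

lemma pow_add_smul_eq_sum (f g : End K W) (n : ℕ) (t : K) :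
    (f + t • g) ^ n = ∑ i ∈ Finset.range (((C f + X * C g) ^ n).natDegree + 1),
      t ^ i • ((C f + X * C g) ^ n).coeff i := by
  have hcomm : ∀ a : End K W, Commute ((RingHom.id _) a) (algebraMap K _ t) :=
    fun a => (Algebra.commutes t a).symm
  have h : eval₂RingHom' _ _ hcomm ((C f + X * C g) ^ n) = (f + t • g) ^ n := by
    rw [map_pow, map_add, map_mul]
    simp [eval₂RingHom', Algebra.smul_def]
  rw [← h]
  simp only [eval₂RingHom', RingHom.coe_mk, MonoidHom.coe_mk, OneHom.coe_mk, eval₂_eq_sum_range,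
    RingHom.id_apply, ← map_pow, ← Algebra.commutes, ← Algebra.smul_def]

lemma finite_setOf_pow_add_smul_apply_eq_zero (f g : End K W) {n : ℕ}
    (h : (f ^ n) ζ ≠ 0) : {t : K | ((f + t • g) ^ n) ζ = 0}.Finite := by
  obtain ⟨φ, hφ⟩ := Projective.exists_dual_ne_zero K h
  let P := (C f + X * C g) ^ n
  let p : K[X] := ∑ i ∈ Finset.range (P.natDegree + 1), C (φ (P.coeff i ζ)) * X ^ i
  have hp : ∀ t, p.eval t = φ (((f + t • g) ^ n) ζ) := fun t => by
    rw [pow_add_smul_eq_sum, LinearMap.sum_apply, map_sum, eval_finsetSum]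
    refine Finset.sum_congr rfl fun i _ => ?_
    simp only [eval_mul, eval_C, eval_pow, eval_X, LinearMap.smul_apply, map_smul, smul_eq_mul,
      mul_comm]
    rfl
  have hp0 : p ≠ 0 := fun h0 => hφ (by simpa [h0] using (hp 0).symm)
  exact (p.finite_setOfPred_isRoot hp0).subset fun t (ht : ((f + t • g) ^ n) ζ = 0) =>
    show p.IsRoot t by rw [IsRoot, hp, ht, map_zero]

end Module.End

lemma Submodule.setOf_add_smul_mem_subsingleton {K W : Type*} [Field K] [AddCommGroup W]
    [Module K W] (p : Submodule K W) (x : W) {u : W} (hu : u ∉ p) :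
    {t : K | x + t • u ∈ p}.Subsingleton := by
  intro t₁ h₁ t₂ h₂
  by_contra hne
  have h := sub_mem (show x + t₁ • u ∈ p from h₁) h₂
  rw [show x + t₁ • u - (x + t₂ • u) = (t₁ - t₂) • u by rw [sub_smul]; abel,
    smul_mem_iff _ (sub_ne_zero.mpr hne)] at h
  exact hu h

namespace LeibnizSuperAlg

variable {V : Type*} [AddCommGroup V] [Module ℂ V] (A : LeibnizSuperAlg V)

def IsSubalgebra (W : Submodule ℂ V) : Prop := ∀ u ∈ W, ∀ v ∈ W, A.br u v ∈ W

def IsHomogeneous (S : Submodule ℂ V) : Prop := S ≤ S ⊓ A.L0 ⊔ S ⊓ A.L1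

variable {A}

lemma mem_prodSpan {S T : Submodule ℂ V} {u v : V} (hu : u ∈ S) (hv : v ∈ T) :
    A.br u v ∈ A.prodSpan S T :=
  subset_span ⟨u, hu, v, hv, rfl⟩

lemma prodSpan_le {S T U : Submodule ℂ V} (h : ∀ u ∈ S, ∀ v ∈ T, A.br u v ∈ U) :
    A.prodSpan S T ≤ U := by
  rw [prodSpan, span_le]
  rintro _ ⟨u, hu, v, hv, rfl⟩
  exact h u hu v hv

lemma br_mem_lcs_one (u v : V) : A.br u v ∈ A.lcs 1 :=
  mem_prodSpan trivial trivial

lemma br_mem_L0_or_L1 {u v : V} (hu : u ∈ A.L0 ∨ u ∈ A.L1) (hv : v ∈ A.L0 ∨ v ∈ A.L1) :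
    A.br u v ∈ A.L0 ∨ A.br u v ∈ A.L1 := by
  rcases hu with hu | hu <;> rcases hv with hv | hv
  exacts [.inl (A.grade00 u hu v hv), .inr (A.grade01 u hu v hv), .inr (A.grade10 u hu v hv),
    .inl (A.grade11 u hu v hv)]

lemma isHomogeneous_top : A.IsHomogeneous ⊤ := by
  simp [IsHomogeneous, A.compl.sup_eq_top]

lemma prodSpan_le_of_isHomogeneous {S T U : Submodule ℂ V} (hS : A.IsHomogeneous S)
    (hT : A.IsHomogeneous T) (h : ∀ u ∈ S, ∀ v ∈ T, (u ∈ A.L0 ∨ u ∈ A.L1) →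
      (v ∈ A.L0 ∨ v ∈ A.L1) → A.br u v ∈ U) :
    A.prodSpan S T ≤ U := by
  refine prodSpan_le fun u hu v hv => ?_
  obtain ⟨u0, ⟨hu0, hu0'⟩, u1, ⟨hu1, hu1'⟩, rfl⟩ := mem_sup.mp (hS hu)
  obtain ⟨v0, ⟨hv0, hv0'⟩, v1, ⟨hv1, hv1'⟩, rfl⟩ := mem_sup.mp (hT hv)
  simp only [map_add, LinearMap.add_apply]
  exact add_mem
    (add_mem (h _ hu0 _ hv0 (.inl hu0') (.inl hv0')) (h _ hu1 _ hv0 (.inr hu1') (.inl hv0')))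
    (add_mem (h _ hu0 _ hv1 (.inl hu0') (.inr hv1')) (h _ hu1 _ hv1 (.inr hu1') (.inr hv1')))

lemma isHomogeneous_prodSpan {S T : Submodule ℂ V} (hS : A.IsHomogeneous S)
    (hT : A.IsHomogeneous T) : A.IsHomogeneous (A.prodSpan S T) :=
  prodSpan_le_of_isHomogeneous hS hT fun _ hu _ hv hu' hv' =>
    (br_mem_L0_or_L1 hu' hv').elim (fun h => mem_sup_left ⟨mem_prodSpan hu hv, h⟩)
      fun h => mem_sup_right ⟨mem_prodSpan hu hv, h⟩

lemma isHomogeneous_lcs : ∀ k, A.IsHomogeneous (A.lcs k)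
  | 0 => isHomogeneous_top
  | k + 1 => isHomogeneous_prodSpan (isHomogeneous_lcs k) isHomogeneous_top

lemma br_br_mem_of_homogeneous {U : Submodule ℂ V} (x : V) {y z : V} (hy : y ∈ A.L0 ∨ y ∈ A.L1)
    (hz : z ∈ A.L0 ∨ z ∈ A.L1) (h₁ : A.br (A.br x y) z ∈ U) (h₂ : A.br (A.br x z) y ∈ U) :
    A.br x (A.br y z) ∈ U := by
  rcases hy with hy | hy <;> rcases hz with hz | hz
  · rw [A.super_ee x y hy z hz]; exact sub_mem h₁ h₂
  · rw [A.super_eo x y hy z hz]; exact sub_mem h₁ h₂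
  · rw [A.super_oe x y hy z hz]; exact sub_mem h₁ h₂
  · rw [A.super_oo x y hy z hz]; exact add_mem h₁ h₂

lemma br_mem_lcs {i j : ℕ} {u v : V} (hu : u ∈ A.lcs i) (hv : v ∈ A.lcs j) :
    A.br u v ∈ A.lcs (i + j + 1) := by
  induction j generalizing i u v with
  | zero => exact mem_prodSpan hu hv
  | succ j ih =>
    refine (prodSpan_le_of_isHomogeneous (U := (A.lcs (i + (j + 1) + 1)).comap (A.br u))
      (isHomogeneous_lcs j) isHomogeneous_top fun a ha b _ ha' hb' => ?_) hv
    refine mem_comap.mpr (br_br_mem_of_homogeneous u ha' hb' ?_ ?_)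
    · rw [show i + (j + 1) + 1 = i + j + 1 + 1 by omega]
      exact mem_prodSpan (ih hu ha) mem_top
    · rw [show i + (j + 1) + 1 = i + 1 + j + 1 by omega]
      exact ih (mem_prodSpan hu mem_top) ha

lemma R_pow_succ_apply (v w : V) (k : ℕ) : (A.R v ^ (k + 1)) w = A.br ((A.R v ^ k) w) v := by
  rw [pow_succ', Module.End.mul_apply]
  rfl

lemma R_pow_apply_mem_lcs (v w : V) (k : ℕ) : (A.R v ^ k) w ∈ A.lcs k := by
  induction k with
  | zero => trivial
  | succ k ih =>
    rw [R_pow_succ_apply]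
    exact mem_prodSpan ih trivial

lemma IsSubalgebra.sup_lcs_eq_top {W : Submodule ℂ V} (hW : A.IsSubalgebra W)
    (h : W ⊔ A.lcs 1 = ⊤) (n : ℕ) : W ⊔ A.lcs (n + 1) = ⊤ := by
  induction n with
  | zero => exact h
  | succ n ih =>
    rw [eq_top_iff, ← h]
    refine sup_le le_sup_left (prodSpan_le fun u _ v _ => ?_)
    obtain ⟨w, hw, a, ha, rfl⟩ := mem_sup.mp (ih ▸ mem_top : u ∈ W ⊔ A.lcs (n + 1))
    obtain ⟨w', hw', b, hb, rfl⟩ := mem_sup.mp (ih ▸ mem_top : v ∈ W ⊔ A.lcs (n + 1))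
    simp only [map_add, LinearMap.add_apply]
    refine add_mem
      (add_mem (mem_sup_left (hW w hw w' hw')) (mem_sup_right (mem_prodSpan ha mem_top)))
      (add_mem (mem_sup_right ?_) (mem_sup_right (mem_prodSpan ha mem_top)))
    simpa using br_mem_lcs (i := 0) (mem_top : w ∈ A.lcs 0) hb

lemma IsSubalgebra.eq_top {W : Submodule ℂ V} (hnil : A.IsNilpotent) (hW : A.IsSubalgebra W)
    (h : W ⊔ A.lcs 1 = ⊤) : W = ⊤ := by
  obtain ⟨s, hs⟩ := hnil
  have hbot : A.lcs (s + 1) = ⊥ :=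
    eq_bot_iff.mpr <| prodSpan_le fun u hu v _ => by
      rw [hs, mem_bot] at hu
      simp [hu]
  simpa [hbot] using hW.sup_lcs_eq_top h s

lemma Generates.span_sup_lcs_one_eq_top {S : Set V} (hS : A.Generates S) :
    span ℂ S ⊔ A.lcs 1 = ⊤ :=
  hS _ (subset_span.trans (SetLike.coe_subset_coe.mpr le_sup_left)) fun u _ v _ =>
    mem_sup_right (br_mem_lcs_one u v)

lemma generates_of_span_sup_lcs_one_eq_top (hnil : A.IsNilpotent) {S : Set V}
    (h : span ℂ S ⊔ A.lcs 1 = ⊤) : A.Generates S := fun _ hSW hW =>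
  IsSubalgebra.eq_top hnil hW (top_unique (h ▸ sup_le_sup_right (span_le.mpr hSW) _))

lemma L1_eq_bot_of_le_lcs_one (hnil : A.IsNilpotent) (h : A.L1 ≤ A.lcs 1) : A.L1 = ⊥ := by
  have hL0 : A.L0 = ⊤ :=
    IsSubalgebra.eq_top hnil A.grade00 (top_unique (A.compl.sup_eq_top ▸ sup_le_sup_left h _))
  exact top_disjoint.mp (hL0 ▸ A.compl.disjoint)

lemma disjoint_map_mkQ {K : Submodule ℂ V} (hK : A.IsHomogeneous K) :
    Disjoint (A.L0.map K.mkQ) (A.L1.map K.mkQ) := by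
  rw [disjoint_def]
  rintro _ ⟨v0, hv0, rfl⟩ ⟨v1, hv1, hv⟩
  rw [mkQ_apply, mkQ_apply, Submodule.Quotient.eq] at hv
  obtain ⟨k0, ⟨hk0, hk0'⟩, k1, ⟨-, hk1'⟩, hk⟩ := mem_sup.mp (hK hv)
  have h0 : v0 + k0 ∈ A.L0 ⊓ A.L1 := by
    refine ⟨add_mem hv0 hk0', ?_⟩
    rw [show v0 + k0 = v1 - k1 by rw [eq_sub_iff_add_eq, add_assoc, hk]; abel]
    exact sub_mem hv1 hk1'
  rw [A.compl.inf_eq_bot, mem_bot, add_eq_zero_iff_eq_neg] at h0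
  rw [mkQ_apply, Submodule.Quotient.mk_eq_zero, h0]
  exact neg_mem hk0

lemma finrank_quotient_lcs_one_le_two [FiniteDimensional ℂ V] {a b : V}
    (hab : A.Generates {a, b}) : finrank ℂ (V ⧸ A.lcs 1) ≤ 2 := by
  have htop : span ℂ {(A.lcs 1).mkQ a, (A.lcs 1).mkQ b} = ⊤ := by
    rw [← Set.image_pair, ← map_span, map_mkQ_eq_top, sup_comm]
    exact hab.span_sup_lcs_one_eq_top
  rw [← finrank_top, ← htop, ← Matrix.range_cons_cons_empty _ _ ![]]
  exact finrank_range_le_card _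

lemma L0_le_span_sup_lcs_one [FiniteDimensional ℂ V] {a b : V} (hab : A.Generates {a, b})
    (hL1 : ¬ A.L1 ≤ A.lcs 1) {x : V} (hx : x ∈ A.L0) (hxK : x ∉ A.lcs 1) :
    A.L0 ≤ span ℂ {x} ⊔ A.lcs 1 := by
  set π := (A.lcs 1).mkQ
  have hM1 : finrank ℂ (A.L1.map π) ≠ 0 := by
    rwa [Ne, Submodule.finrank_eq_zero, ← LinearMap.le_ker_iff_map, ker_mkQ]
  have hM0 : finrank ℂ (A.L0.map π) ≤ 1 := by
    have hsum := Submodule.finrank_sup_add_finrank_inf_eq (A.L0.map π) (A.L1.map π)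
    rw [(disjoint_map_mkQ (isHomogeneous_lcs 1)).eq_bot, finrank_bot] at hsum
    have := (Submodule.finrank_le (A.L0.map π ⊔ A.L1.map π)).trans
      (finrank_quotient_lcs_one_le_two hab)
    omega
  have hx0 : π x ≠ 0 := by rwa [Ne, mkQ_apply, Submodule.Quotient.mk_eq_zero]
  have hspan : span ℂ {π x} = A.L0.map π :=
    eq_of_le_of_finrank_le (span_le.mpr (Set.singleton_subset_iff.mpr ⟨x, hx, rfl⟩))
      (by rwa [finrank_span_singleton hx0])
  rw [sup_comm, ← comap_map_mkQ, map_span, Set.image_singleton, hspan]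
  exact le_comap_map _ _

lemma span_R_pow_apply_le (v z : V) (n : ℕ) :
    span ℂ (Set.range fun i : Fin n => (A.R v ^ (i : ℕ)) z) ≤ span ℂ {z} ⊔ A.lcs 1 := by
  rw [span_le]
  rintro _ ⟨⟨_ | i, _⟩, rfl⟩
  · exact mem_sup_left (mem_span_singleton_self z)
  · show (A.R v ^ (i + 1)) z ∈ _
    rw [R_pow_succ_apply]
    exact mem_sup_right (br_mem_lcs_one _ _)

lemma linearIndependent_R_pow_apply_and_span_eq [FiniteDimensional ℂ V] (hnil : A.IsNilpotent)
    {m : ℕ} (hm : finrank ℂ A.L1 = m) (hm1 : 1 ≤ m) {v z : V} (hv : v ∈ A.L0) (hz : z ∈ A.L1)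
    (hvz : (A.R v ^ (m - 1)) z ≠ 0) :
    LinearIndependent ℂ (fun i : Fin m => (A.R v ^ (i : ℕ)) z) ∧
      span ℂ (Set.range fun i : Fin m => (A.R v ^ (i : ℕ)) z) = A.L1 ∧ (A.R v ^ m) z = 0 := by
  obtain ⟨k, rfl⟩ : ∃ k, m = k + 1 := ⟨m - 1, by omega⟩
  rw [Nat.add_sub_cancel] at hvz
  have hR : ∀ w ∈ A.L1, A.R v w ∈ A.L1 := fun w hw => A.grade10 w hw v hv
  obtain ⟨s, hs⟩ := hnil
  have hlast : (A.R v ^ (k + 1)) z = 0 := by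
    refine hm ▸ Module.End.pow_finrank_apply_eq_zero hR hz (N := s) ?_
    simpa [hs] using A.R_pow_apply_mem_lcs v z s
  exact ⟨Module.End.linearIndependent_pow_apply hvz hlast,
    Module.End.span_pow_apply_eq hR hz hvz hlast hm, hlast⟩

lemma generates_of_le_span_sup_of_span_R_pow_apply (hnil : A.IsNilpotent) {S : Set V} {v z : V}
    {n : ℕ} (hz : z ∈ S) (hL0 : A.L0 ≤ span ℂ S ⊔ A.lcs 1)
    (hspan : span ℂ (Set.range fun i : Fin n => (A.R v ^ (i : ℕ)) z) = A.L1) : A.Generates S :=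
  generates_of_span_sup_lcs_one_eq_top hnil <| top_unique <| A.compl.sup_eq_top ▸ sup_le hL0
    (hspan ▸ (span_R_pow_apply_le v z n).trans
      (sup_le_sup_right (span_mono (Set.singleton_subset_iff.mpr hz)) _))

lemma exists_add_smul_notMem_lcs_one {x u z : V} {n : ℕ} (hu : u ∉ A.lcs 1)
    (hxz : (A.R x ^ n) z ≠ 0) :
    ∃ t : ℂ, x + t • u ∉ A.lcs 1 ∧ (A.R (x + t • u) ^ n) z ≠ 0 := by
  have hbad := ((A.lcs 1).setOf_add_smul_mem_subsingleton x hu).finite.union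
    (Module.End.finite_setOf_pow_add_smul_apply_eq_zero (A.R x) (A.R u) hxz)
  obtain ⟨t, ht⟩ := hbad.infinite_compl.nonempty
  simp only [Set.mem_compl_iff, Set.mem_union, not_or] at ht
  have hR : A.R (x + t • u) = A.R x + t • A.R u := by simp only [R, map_add, map_smul]
  exact ⟨t, ht.1, hR ▸ ht.2⟩

end LeibnizSuperAlg

/-- In a finite-dimensional nilpotent complex Leibniz superalgebra with
`dim L₁ = m ≥ 1` which is two-generated and admits `x ∈ L₀ \ L₀²` acting on `L₁` by a
single Jordan block of size `m`, one can choose generators `x₁ ∈ L₀`, `y₁ ∈ L₁` and a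
basis `y₁,…,y_m` of `L₁` with `[y_j,x₁] = y_{j+1}` (`1 ≤ j ≤ m−1`) and `[y_m,x₁] = 0`. -/
theorem statement4 {V : Type*} [AddCommGroup V] [Module ℂ V] [FiniteDimensional ℂ V]
    (A : LeibnizSuperAlg V) (m : ℕ)
    (hm : Module.finrank ℂ A.L1 = m) (hm1 : 1 ≤ m)
    (hnil : A.IsNilpotent)
    (h2gen : ∃ a b : V, a ≠ b ∧ A.Generates {a, b})
    (hnot1gen : ∀ g : V, ¬ A.Generates {g})
    (hjordan : ∃ x ∈ A.L0, x ∉ A.lcs0 1 ∧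
      (∃ z ∈ A.L1, ((A.R x) ^ (m - 1)) z ≠ 0) ∧ (∀ z ∈ A.L1, ((A.R x) ^ m) z = 0)) :
    ∃ x₁ ∈ A.L0, ∃ y : Fin m → V,
      (∀ i, y i ∈ A.L1) ∧ LinearIndependent ℂ y ∧
      Submodule.span ℂ (Set.range y) = A.L1 ∧
      A.Generates {x₁, y ⟨0, by omega⟩} ∧
      (∀ i : ℕ, ∀ h : i + 1 < m, A.br (y ⟨i, by omega⟩) x₁ = y ⟨i + 1, h⟩) ∧
      A.br (y ⟨m - 1, by omega⟩) x₁ = 0 := by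
  obtain ⟨x, hx, -, ⟨z, hz, hxz⟩, -⟩ := hjordan
  obtain ⟨a, b, -, hab⟩ := h2gen
  have hchain {v : V} (hv : v ∈ A.L0) (hvz : (A.R v ^ (m - 1)) z ≠ 0) :=
    A.linearIndependent_R_pow_apply_and_span_eq hnil hm hm1 hv hz hvz
  have hL1 : ¬ A.L1 ≤ A.lcs 1 := fun h => by
    rw [A.L1_eq_bot_of_le_lcs_one hnil h, finrank_bot] at hm
    omega
  have hL0 : ¬ A.L0 ≤ A.lcs 1 := fun h => hnot1gen z <|
    A.generates_of_le_span_sup_of_span_R_pow_apply hnil rfl (h.trans le_sup_right)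
      (hchain hx hxz).2.1
  obtain ⟨u, hu, huK⟩ := SetLike.not_le_iff_exists.mp hL0
  obtain ⟨t, htK, ht⟩ := A.exists_add_smul_notMem_lcs_one huK hxz
  set x₁ := x + t • u
  have hx₁ : x₁ ∈ A.L0 := add_mem hx (smul_mem _ _ hu)
  obtain ⟨hli, hspan, hlast⟩ := hchain hx₁ ht
  refine ⟨x₁, hx₁, fun i => (A.R x₁ ^ (i : ℕ)) z, fun i => hspan ▸ subset_span ⟨i, rfl⟩, hli,
    hspan, ?_, fun i _ => (A.R_pow_succ_apply x₁ z i).symm, ?_⟩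
  · simp only [pow_zero, Module.End.one_apply]
    exact A.generates_of_le_span_sup_of_span_R_pow_apply hnil (Set.mem_insert_of_mem _ rfl)
      ((A.L0_le_span_sup_lcs_one hab hL1 hx₁ htK).trans
        (sup_le_sup_right (span_mono (by simp)) _)) hspan
  · show A.br ((A.R x₁ ^ (m - 1)) z) x₁ = 0
    rw [← A.R_pow_succ_apply, Nat.sub_add_cancel hm1, hlast]
end

section
/- Let L = L₀ ⊕ L₁ be a complex Leibniz superalgebra with dim L₀ = n and dim L₁ = m ≥ 1, of nilindex n + m + 1 (i.e. L^{n+m} ≠ 0 and L^{n+m+1} = 0). Then m = n if n + m is even and m = n + 1 if n + m is odd, and there exists a basis e₁, …, e_{n+m} of L, with e_i ∈ L₁ for i odd and e_i ∈ L₀ for i even, such that [e_i, e₁] = e_{i+1} for 1 ≤ i ≤ n+m−1, [e_i, e₂] = 2 e_{i+2} for 1 ≤ i ≤ n+m−2, and all other products of basis elements are zero. -/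
/-
Because `[L^k, L²] ⊆ L^{k+2}` (apply the superidentity to `[u, [y, z]]`), if `x` spans `L / L²`
then `e_k := [[x, x], …, x]` (`k` brackets) spans `L^{k+1} / L^{k+2}`, so the `e_k` span `L`.
A nilindex of `dim L + 1` makes the central series drop by exactly one dimension at each step, so
`L²` has codimension one and any `x ∉ L²` will do; `x` can be taken odd, since for even `x` all
`e_k`, hence all of `L`, would be even. The `e_k` then alternate in parity, which gives the
dimensions of `L₀` and `L₁`, and the superidentity for odd `x` gives
`[z, e_1] = [z, [x, x]] = 2 [[z, x], x]` and then `[z, e_k] = 0` for `k ≥ 2`.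
-/

theorem Submodule.span_singleton_sup_eq_top_of_finrank_add_one {K V : Type*} [Field K]
    [AddCommGroup V] [Module K V] [FiniteDimensional K V] {W : Submodule K V}
    (hW : Module.finrank K W + 1 = Module.finrank K V) {x : V} (hx : x ∉ W) :
    (K ∙ x) ⊔ W = ⊤ := by
  have hlt : W < (K ∙ x) ⊔ W := lt_of_le_of_ne le_sup_right fun h =>
    hx (h ▸ Submodule.mem_sup_left (Submodule.mem_span_singleton_self x))
  have := Submodule.finrank_lt_finrank_of_lt hlt
  exact Submodule.eq_top_of_finrank_eq (le_antisymm (Submodule.finrank_le _) (by omega))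

theorem Module.Basis.card_le_finrank_of_forall_mem {K V ι κ : Type*} [DivisionRing K]
    [AddCommGroup V] [Module K V] [FiniteDimensional K V] [Fintype κ] (b : Module.Basis ι K V)
    {f : κ → ι} (hf : Function.Injective f) {W : Submodule K V} (hW : ∀ j, b (f j) ∈ W) :
    Fintype.card κ ≤ Module.finrank K W := by
  rw [← finrank_span_eq_card (b.linearIndependent.comp f hf)]
  exact Submodule.finrank_mono (Submodule.span_le.2 (Set.range_subset_iff.2 hW))

namespace LeibnizSuperAlg

open Module

variable {V : Type*} [AddCommGroup V] [Module ℂ V] (A : LeibnizSuperAlg V)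

lemma br_mem_lcs_succ {k : ℕ} {u : V} (hu : u ∈ A.lcs k) (v : V) : A.br u v ∈ A.lcs (k + 1) :=
  Submodule.subset_span ⟨u, hu, v, Submodule.mem_top, rfl⟩

lemma lcs_succ_le : ∀ k, A.lcs (k + 1) ≤ A.lcs k
  | 0 => le_top
  | k + 1 => Submodule.span_le.2 fun _ ⟨_, hu, v, _, hz⟩ =>
      hz ▸ A.br_mem_lcs_succ (lcs_succ_le k hu) v

lemma lcs_antitone : Antitone A.lcs :=
  antitone_nat_of_succ_le A.lcs_succ_le

lemma lcs_ne_bot_of_le {k l : ℕ} (hl : A.lcs l ≠ ⊥) (hkl : k ≤ l) : A.lcs k ≠ ⊥ :=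
  fun hk => hl (eq_bot_iff.2 (hk ▸ A.lcs_antitone hkl))

-- After splitting `y` and `z` into homogeneous parts, the superidentity applies to each piece.
lemma br_br_mem_of_forall {W : Submodule ℂ V} {x : V} (hW : ∀ y z, A.br (A.br x y) z ∈ W)
    (y z : V) : A.br x (A.br y z) ∈ W := by
  have hsplit (w : V) : ∃ w₀ ∈ A.L0, ∃ w₁ ∈ A.L1, w₀ + w₁ = w :=
    Submodule.mem_sup.1 (A.compl.sup_eq_top ▸ Submodule.mem_top)
  obtain ⟨y₀, hy₀, y₁, hy₁, rfl⟩ := hsplit y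
  obtain ⟨z₀, hz₀, z₁, hz₁, rfl⟩ := hsplit z
  simp only [map_add, LinearMap.add_apply]
  refine add_mem (add_mem ?_ ?_) (add_mem ?_ ?_)
  · rw [A.super_ee x y₀ hy₀ z₀ hz₀]; exact sub_mem (hW _ _) (hW _ _)
  · rw [A.super_oe x y₁ hy₁ z₀ hz₀]; exact sub_mem (hW _ _) (hW _ _)
  · rw [A.super_eo x y₀ hy₀ z₁ hz₁]; exact sub_mem (hW _ _) (hW _ _)
  · rw [A.super_oo x y₁ hy₁ z₁ hz₁]; exact add_mem (hW _ _) (hW _ _)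

lemma br_mem_lcs_add_two {k : ℕ} {u v : V} (hu : u ∈ A.lcs k) (hv : v ∈ A.lcs 1) :
    A.br u v ∈ A.lcs (k + 2) := by
  induction hv using Submodule.span_induction with
  | mem _ h =>
    obtain ⟨p, -, q, -, rfl⟩ := h
    exact A.br_br_mem_of_forall (fun y z => A.br_mem_lcs_succ (A.br_mem_lcs_succ hu y) z) p q
  | zero => rw [map_zero]; exact zero_mem _
  | add _ _ _ _ h h' => rw [map_add]; exact add_mem h h'
  | smul c _ _ h => rw [map_smul]; exact Submodule.smul_mem _ c h

lemma lcs_add_eq_of_lcs_succ_eq {k : ℕ} (h : A.lcs (k + 1) = A.lcs k) :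
    ∀ j, A.lcs (k + j) = A.lcs k
  | 0 => rfl
  | j + 1 => by
    rw [← add_assoc]
    change A.prodSpan (A.lcs (k + j)) ⊤ = _
    rw [lcs_add_eq_of_lcs_succ_eq h j]
    exact h

lemma lcs_succ_lt (hnil : A.IsNilpotent) {k : ℕ} (hk : A.lcs k ≠ ⊥) :
    A.lcs (k + 1) < A.lcs k := by
  obtain ⟨s, hs⟩ := hnil
  refine lt_of_le_of_ne (A.lcs_succ_le k) fun h => hk ?_
  rw [← A.lcs_add_eq_of_lcs_succ_eq h s]
  exact eq_bot_iff.2 (hs ▸ A.lcs_antitone (Nat.le_add_left s k))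

def chain (x : V) : ℕ → V
  | 0 => x
  | k + 1 => A.br (chain x k) x

lemma chain_mem_lcs (x : V) : ∀ k, A.chain x k ∈ A.lcs k
  | 0 => Submodule.mem_top
  | k + 1 => A.br_mem_lcs_succ (chain_mem_lcs x k) x

lemma chain_eq_zero {x : V} {N k : ℕ} (hN : A.lcs N = ⊥) (hk : N ≤ k) : A.chain x k = 0 := by
  have := A.lcs_antitone hk (A.chain_mem_lcs x k)
  rwa [hN, Submodule.mem_bot] at this

lemma lcs_le_span_chain_sup {x : V} (hx : (ℂ ∙ x) ⊔ A.lcs 1 = ⊤) :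
    ∀ k, A.lcs k ≤ (ℂ ∙ A.chain x k) ⊔ A.lcs (k + 1)
  | 0 => hx.ge
  | k + 1 => by
    refine Submodule.span_le.2 ?_
    rintro _ ⟨u, hu, v, -, rfl⟩
    obtain ⟨_, hy, u', hu', rfl⟩ := Submodule.mem_sup.1 (lcs_le_span_chain_sup hx k hu)
    obtain ⟨c, rfl⟩ := Submodule.mem_span_singleton.1 hy
    obtain ⟨_, hw, v', hv', rfl⟩ := Submodule.mem_sup.1 (hx.ge (Submodule.mem_top (x := v)))
    obtain ⟨d, rfl⟩ := Submodule.mem_span_singleton.1 hw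
    have hexpand : A.br (c • A.chain x k + u') (d • x + v') = (c * d) • A.chain x (k + 1) +
        (c • A.br (A.chain x k) v' + A.br u' (d • x + v')) := by
      simp only [chain, map_add, map_smul, LinearMap.add_apply, LinearMap.smul_apply]
      module
    rw [hexpand]
    refine add_mem (Submodule.mem_sup_left (Submodule.smul_mem _ _
      (Submodule.mem_span_singleton_self _))) (Submodule.mem_sup_right (add_mem ?_ ?_))
    · exact Submodule.smul_mem _ _ (A.br_mem_lcs_add_two (A.chain_mem_lcs x k) hv')
    · exact A.br_mem_lcs_succ hu' _

lemma top_le_span_chain_sup {x : V} (hx : (ℂ ∙ x) ⊔ A.lcs 1 = ⊤) :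
    ∀ k, ⊤ ≤ Submodule.span ℂ (Set.range fun i : Fin k => A.chain x i) ⊔ A.lcs k
  | 0 => le_sup_right
  | k + 1 => by
    refine (top_le_span_chain_sup hx k).trans (sup_le (le_sup_of_le_left ?_)
      ((A.lcs_le_span_chain_sup hx k).trans (sup_le_sup_right ?_ _)))
    · exact Submodule.span_mono (Set.range_subset_iff.2 fun i => ⟨i.castSucc, rfl⟩)
    · exact (Submodule.span_singleton_le_iff_mem _ _).2
        (Submodule.subset_span ⟨Fin.last k, rfl⟩)

lemma top_le_span_chain {x : V} (hx : (ℂ ∙ x) ⊔ A.lcs 1 = ⊤) {N : ℕ} (hN : A.lcs N = ⊥) :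
    ⊤ ≤ Submodule.span ℂ (Set.range fun i : Fin N => A.chain x i) := by
  simpa [hN] using A.top_le_span_chain_sup hx N

lemma chain_mem_L0 {x : V} (hx : x ∈ A.L0) : ∀ k, A.chain x k ∈ A.L0
  | 0 => hx
  | k + 1 => A.grade00 _ (chain_mem_L0 hx k) _ hx

lemma chain_parity {x : V} (hx : x ∈ A.L1) :
    ∀ k, (Even k → A.chain x k ∈ A.L1) ∧ (¬ Even k → A.chain x k ∈ A.L0)
  | 0 => ⟨fun _ => hx, fun h => (h (by decide)).elim⟩
  | k + 1 => by
    have ih := chain_parity hx k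
    rw [Nat.even_add_one, not_not]
    exact ⟨fun hk => A.grade01 _ (ih.2 hk) _ hx, fun hk => A.grade11 _ (ih.1 hk) _ hx⟩

lemma chain_mem_L0_or_L1 {x : V} (hx : x ∈ A.L1) (k : ℕ) :
    A.chain x k ∈ A.L0 ∨ A.chain x k ∈ A.L1 := by
  by_cases hk : Even k
  · exact Or.inr ((A.chain_parity hx k).1 hk)
  · exact Or.inl ((A.chain_parity hx k).2 hk)

lemma br_chain_one {x : V} (hx : x ∈ A.L1) (z : V) :
    A.br z (A.chain x 1) = (2 : ℂ) • A.br (A.br z x) x := by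
  rw [chain, chain, A.super_oo z x hx x hx, two_smul]

lemma br_chain_add_two {x : V} (hx : x ∈ A.L1) : ∀ k z, A.br z (A.chain x (k + 2)) = 0
  | 0, z => by
    have h₁ : A.chain x 1 ∈ A.L0 := (A.chain_parity hx 1).2 (by decide)
    rw [chain, A.super_eo z _ h₁ x hx, A.br_chain_one hx, A.br_chain_one hx, map_smul,
      LinearMap.smul_apply, sub_self]
  | k + 1, z => by
    have ih := br_chain_add_two hx k
    rw [chain]
    rcases A.chain_mem_L0_or_L1 hx (k + 2) with h | h
    · rw [A.super_eo z _ h x hx, ih, ih, map_zero, LinearMap.zero_apply, sub_zero]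
    · rw [A.super_oo z _ h x hx, ih, ih, map_zero, LinearMap.zero_apply, add_zero]

lemma br_chain_chain {x : V} (hx : x ∈ A.L1) (i j : ℕ) :
    A.br (A.chain x i) (A.chain x j) =
      if j = 0 then A.chain x (i + 1) else if j = 1 then (2 : ℂ) • A.chain x (i + 2) else 0 := by
  rcases j with _ | _ | j
  · rfl
  · rw [A.br_chain_one hx]; rfl
  · rw [A.br_chain_add_two hx]; rfl

lemma br_chain_fin {x : V} (hx : x ∈ A.L1) {N : ℕ} (hN : A.lcs N = ⊥) (i j : Fin N) :
    A.br (A.chain x i) (A.chain x j) =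
      if _ : j.val = 0 ∧ i.val + 1 < N then A.chain x (i.val + 1)
      else if _ : j.val = 1 ∧ i.val + 2 < N then (2 : ℂ) • A.chain x (i.val + 2)
      else 0 := by
  rw [A.br_chain_chain hx]
  split_ifs <;> first
    | rfl | omega | exact A.chain_eq_zero hN (by omega)
    | rw [A.chain_eq_zero hN (by omega), smul_zero]

section FiniteDimensional

variable [FiniteDimensional ℂ V]

lemma add_one_le_finrank_lcs (hnil : A.IsNilpotent) :
    ∀ j {k : ℕ}, A.lcs (k + j) ≠ ⊥ → j + 1 ≤ finrank ℂ (A.lcs k)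
  | 0, _, h => Nat.one_le_iff_ne_zero.2 fun h0 => h (Submodule.finrank_eq_zero.1 h0)
  | j + 1, k, h => by
    have hj := add_one_le_finrank_lcs hnil j (k := k + 1) (by rwa [add_right_comm, add_assoc])
    have hk := Submodule.finrank_lt_finrank_of_lt
      (A.lcs_succ_lt hnil (A.lcs_ne_bot_of_le h (Nat.le_add_right k _)))
    omega

lemma finrank_lcs_one_add_one (hnil : A.IsNilpotent) (h : A.lcs (finrank ℂ V - 1) ≠ ⊥) :
    finrank ℂ (A.lcs 1) + 1 = finrank ℂ V := by
  have hlt : finrank ℂ (A.lcs 1) < finrank ℂ (A.lcs 0) :=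
    Submodule.finrank_lt_finrank_of_lt (A.lcs_succ_lt hnil (A.lcs_ne_bot_of_le h (Nat.zero_le _)))
  rw [show A.lcs 0 = ⊤ from rfl, finrank_top] at hlt
  rcases Nat.lt_or_ge (finrank ℂ V) 2 with hV | hV
  · omega
  · have := A.add_one_le_finrank_lcs hnil (finrank ℂ V - 2) (k := 1)
      (by rwa [show 1 + (finrank ℂ V - 2) = finrank ℂ V - 1 by omega])
    omega

lemma add_one_div_two_le_finrank_L1 {x : V} {N : ℕ} {e : Basis (Fin N) ℂ V} (hx : x ∈ A.L1)
    (he : ⇑e = fun i : Fin N => A.chain x i) : (N + 1) / 2 ≤ finrank ℂ A.L1 := by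
  simpa using e.card_le_finrank_of_forall_mem
    (f := fun j : Fin ((N + 1) / 2) => ⟨2 * j, by omega⟩)
    (fun a b h => Fin.ext (by simp only [Fin.mk.injEq] at h; omega))
    fun j => by rw [he]; exact (A.chain_parity hx _).1 (even_two_mul _)

lemma div_two_le_finrank_L0 {x : V} {N : ℕ} {e : Basis (Fin N) ℂ V} (hx : x ∈ A.L1)
    (he : ⇑e = fun i : Fin N => A.chain x i) : N / 2 ≤ finrank ℂ A.L0 := by
  simpa using e.card_le_finrank_of_forall_mem
    (f := fun j : Fin (N / 2) => ⟨2 * j + 1, by omega⟩)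
    (fun a b h => Fin.ext (by simp only [Fin.mk.injEq] at h; omega))
    fun j => by
      rw [he]; exact (A.chain_parity hx _).2 (Nat.not_even_iff_odd.2 (odd_two_mul_add_one _))

lemma exists_mem_L1_not_mem_lcs_one (hnil : A.IsNilpotent)
    (h : A.lcs (finrank ℂ V - 1) ≠ ⊥) (hL1 : A.L1 ≠ ⊥) : ∃ x ∈ A.L1, x ∉ A.lcs 1 := by
  by_contra! hL1le
  have hcodim := A.finrank_lcs_one_add_one hnil h
  obtain ⟨y, hy₀, hy⟩ : ∃ y ∈ A.L0, y ∉ A.lcs 1 := by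
    by_contra! hL0le
    have : A.lcs 1 = ⊤ := top_le_iff.1 (A.compl.sup_eq_top ▸ sup_le hL0le hL1le)
    rw [this, finrank_top] at hcodim
    omega
  -- an even generator would make all of `L` even
  obtain ⟨s, hs⟩ := hnil
  have hL0 : ⊤ ≤ A.L0 := (A.top_le_span_chain
    (Submodule.span_singleton_sup_eq_top_of_finrank_add_one hcodim hy) hs).trans
      (Submodule.span_le.2 (Set.range_subset_iff.2 fun i => A.chain_mem_L0 hy₀ i))
  exact hL1 (eq_bot_iff.2 fun z hz =>
    (Submodule.mem_bot ℂ).2 (Submodule.disjoint_def.1 A.compl.disjoint z (hL0 trivial) hz))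

end FiniteDimensional

end LeibnizSuperAlg

/-- A complex Leibniz superalgebra with `dim L₀ = n`, `dim L₁ = m ≥ 1` and
nilindex `n + m + 1` (`L^{n+m} ≠ 0`, `L^{n+m+1} = 0`) satisfies `m = n` if `n+m` is even
and `m = n+1` if `n+m` is odd, and has a basis `e₁,…,e_{n+m}` (0-indexed here, with
`e_i ∈ L₁` for even 0-index, `e_i ∈ L₀` for odd 0-index) such that `[e_i,e₁] = e_{i+1}`,
`[e_i,e₂] = 2e_{i+2}` and all other products of basis vectors vanish. -/
theorem statement8 {V : Type*} [AddCommGroup V] [Module ℂ V] [FiniteDimensional ℂ V]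
    (A : LeibnizSuperAlg V) (n m : ℕ)
    (hn : Module.finrank ℂ A.L0 = n) (hm : Module.finrank ℂ A.L1 = m) (hm1 : 1 ≤ m)
    (h1 : A.lcs (n + m - 1) ≠ ⊥) (h2 : A.lcs (n + m) = ⊥) :
    ((Even (n + m) → m = n) ∧ (¬ Even (n + m) → m = n + 1)) ∧
    ∃ e : Module.Basis (Fin (n + m)) ℂ V,
      (∀ i : Fin (n + m), (Even i.val → e i ∈ A.L1) ∧ (¬ Even i.val → e i ∈ A.L0)) ∧
      (∀ i j : Fin (n + m), A.br (e i) (e j) =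
        if h : j.val = 0 ∧ i.val + 1 < n + m then e ⟨i.val + 1, h.2⟩
        else if h' : j.val = 1 ∧ i.val + 2 < n + m then (2 : ℂ) • e ⟨i.val + 2, h'.2⟩
        else 0) := by
  have hV : Module.finrank ℂ V = n + m := by
    rw [← Submodule.finrank_add_eq_of_isCompl A.compl, hn, hm]
  have hnil : A.IsNilpotent := ⟨n + m, h2⟩
  have hL1 : A.L1 ≠ ⊥ := fun h => by rw [h, finrank_bot] at hm; omega
  have h1' : A.lcs (Module.finrank ℂ V - 1) ≠ ⊥ := hV ▸ h1
  obtain ⟨x, hx₁, hx⟩ := A.exists_mem_L1_not_mem_lcs_one hnil h1' hL1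
  have hspan := A.top_le_span_chain (Submodule.span_singleton_sup_eq_top_of_finrank_add_one
    (A.finrank_lcs_one_add_one hnil h1') hx) h2
  have hcard : Fintype.card (Fin (n + m)) = Module.finrank ℂ V := by rw [Fintype.card_fin, hV]
  set e := basisOfTopLeSpanOfCardEqFinrank _ hspan hcard
  have he : ⇑e = fun i : Fin (n + m) => A.chain x i :=
    coe_basisOfTopLeSpanOfCardEqFinrank _ hspan hcard
  have hm_ge := A.add_one_div_two_le_finrank_L1 hx₁ he
  have hn_ge := A.div_two_le_finrank_L0 hx₁ he
  refine ⟨⟨fun hev => ?_, fun hodd => ?_⟩, e, fun i => he ▸ A.chain_parity hx₁ i,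
    fun i j => he ▸ A.br_chain_fin hx₁ h2 i j⟩
  · rw [Nat.even_iff] at hev; omega
  · rw [Nat.even_iff] at hodd; omega
end
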